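/- Let ∃x₁…x_m ∀y₁…y_k φ(x, y) be a quantified Boolean formula with φ in 3-DNF, let TA be the associated sketch threshold automaton with indeterminates v₁, …, v_m, and let ψ = F G (φ' ⇒ ({ℓ_{y_k}} = 0)) ∧ G ({ℓ_F} = 0) be the associated ELTL_FT specification. Then ∃x₁…x_m ∀y₁…y_k φ(x, y) is true if and only if there exists an assignment μ: {v₁, …, v_m} → ℚ such that every infinite path of TA[μ] starting from an initial configuration satisfies ¬ψ; moreover, in that case μ can be taken with values in {0, 1}. -/

import Mathlib

/-!
Threshold automata (Konnov, Veith, Widder), following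
"Complexity of Verification and Synthesis of Threshold Automata".
-/

/-- A threshold guard `x ⋈ a₀ + a₁·p₁ + … + a_{|Π|}·p_{|Π|}` over shared variables `V` and
parameters `P`.  `isRise = true` means a *rise* guard `x ≥ …`, and `isRise = false` means a
*fall* guard `x < …`. -/
structure TGuard (V P : Type) where
  var : V
  isRise : Bool
  a0 : ℚ
  coef : P → ℚ

/-- A configuration `σ = (κ, g, p)`: numbers of processes in each location, values of the
shared variables, and values of the parameters. -/
structure Config (L V P : Type) where
  κ : L → ℕ
  g : V → ℕ
  p : P → ℕ

/-- A rule of a threshold automaton: source and target locations, a guard that is a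
(finite) conjunction of threshold guards, and an update `V → {0,1}`. -/
structure TRule (L V P : Type) where
  src : L
  dst : L
  guard : List (TGuard V P)
  upd : V → ℕ
  upd_le_one : ∀ v, upd v ≤ 1

/-- A threshold automaton `(L, I, Γ, R)` together with its environment `(Π, RC, N)`.
`L`, `V`, `P` are the types of locations, shared variables and parameters, and `R` is the
index type of rules. -/
structure TA (L V P R : Type) where
  initial : Set L
  initial_nonempty : initial.Nonempty
  rc : Set (P → ℕ)
  N : (P → ℕ) → ℕ
  rule : R → TRule L V P

variable {L V P R : Type}

/-- Satisfaction of a threshold guard by values `g` of the shared variables and `p` of the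
parameters. -/
def TGuard.holds [Fintype P] (φ : TGuard V P) (g : V → ℕ) (p : P → ℕ) : Prop :=
  if φ.isRise then φ.a0 + ∑ i : P, φ.coef i * (p i : ℚ) ≤ (g φ.var : ℚ)
  else (g φ.var : ℚ) < φ.a0 + ∑ i : P, φ.coef i * (p i : ℚ)

/-- A configuration enables a rule. -/
def TRule.enabledAt [Fintype P] (r : TRule L V P) (σ : Config L V P) : Prop :=
  0 < σ.κ r.src ∧ ∀ φ ∈ r.guard, φ.holds σ.g σ.p

/-- The result of firing a rule at a configuration. -/
def TRule.fire [DecidableEq L] (r : TRule L V P) (σ : Config L V P) : Config L V P where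
  κ := fun ℓ => σ.κ ℓ + (if ℓ = r.dst then 1 else 0) - (if ℓ = r.src then 1 else 0)
  g := fun v => σ.g v + r.upd v
  p := σ.p

namespace TA

variable [Fintype P] [DecidableEq L]

/-- `σ` is a configuration of `ta`: the parameters satisfy the resilience condition and the
total number of processes is `N(p)`. -/
def validConfig [Fintype L] (ta : TA L V P R) (σ : Config L V P) : Prop :=
  σ.p ∈ ta.rc ∧ ∑ ℓ : L, σ.κ ℓ = ta.N σ.p

/-- Initial configurations. -/
def isInitial [Fintype L] (ta : TA L V P R) (σ : Config L V P) : Prop :=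
  ta.validConfig σ ∧ (∀ ℓ, ℓ ∉ ta.initial → σ.κ ℓ = 0) ∧ ∀ v, σ.g v = 0

/-- A schedule (finite sequence of rules) is applicable to a configuration. -/
def applicable (ta : TA L V P R) : Config L V P → List R → Prop
  | _, [] => True
  | σ, r :: τ => (ta.rule r).enabledAt σ ∧ ta.applicable ((ta.rule r).fire σ) τ

/-- The configuration `τ(σ)` resulting from applying a schedule. -/
def apply (ta : TA L V P R) : Config L V P → List R → Config L V P
  | σ, [] => σ
  | σ, r :: τ => ta.apply ((ta.rule r).fire σ) τ

/-- The configurations visited by the path from `σ` along `τ` (including both endpoints). -/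
def visited (ta : TA L V P R) : Config L V P → List R → List (Config L V P)
  | σ, [] => [σ]
  | σ, r :: τ => σ :: ta.visited ((ta.rule r).fire σ) τ

/-- Reachability `σ →* σ'`. -/
def reaches (ta : TA L V P R) (σ σ' : Config L V P) : Prop :=
  ∃ τ : List R, ta.applicable σ τ ∧ ta.apply σ τ = σ'

/-- The set of all threshold guards occurring in rules of the automaton. -/
def guards (ta : TA L V P R) : Set (TGuard V P) :=
  {φ | ∃ r : R, φ ∈ (ta.rule r).guard}

/-- The context `ω(σ)`: rise guards of `ta` that are true in `σ` together with fall guards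
of `ta` that are false in `σ`. -/
def context (ta : TA L V P R) (σ : Config L V P) : Set (TGuard V P) :=
  {φ | φ ∈ ta.guards ∧ if φ.isRise then φ.holds σ.g σ.p else ¬ φ.holds σ.g σ.p}

/-- A schedule applicable at `σ` is steady if all configurations visited by the
corresponding path have the same context. -/
def steady (ta : TA L V P R) (σ : Config L V P) (τ : List R) : Prop :=
  ∀ σ' ∈ ta.visited σ τ, ta.context σ' = ta.context σ

end TA

namespace TA

variable [Fintype P] [DecidableEq L]

/-- The configuration reached after the first `n` steps of the infinite schedule `ρ`. -/
def run (ta : TA L V P R) (σ : Config L V P) (ρ : ℕ → R) (n : ℕ) : Config L V P :=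
  ta.apply σ ((List.range n).map ρ)

/-- The infinite schedule `ρ` is applicable to `σ`. -/
def infApplicable (ta : TA L V P R) (σ : Config L V P) (ρ : ℕ → R) : Prop :=
  ∀ n : ℕ, (ta.rule (ρ n)).enabledAt (ta.run σ ρ n)

end TA

/-! ### The Fault-Tolerant Temporal Logic ELTL_FT -/

/-- Configuration formulas `cf ::= (S = 0) | ¬(S = 0) | cf ∧ cf`. -/
inductive CF (L : Type) where
  | emptyAll : Set L → CF L
  | notEmptyAll : Set L → CF L
  | and : CF L → CF L → CF L

/-- Guard formulas `gf ::= guard | gf ∧ gf | gf ∨ gf`. -/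
inductive GF (V P : Type) where
  | guard : TGuard V P → GF V P
  | and : GF V P → GF V P → GF V P
  | or : GF V P → GF V P → GF V P

/-- Propositional formulas `pf ::= cf | (gf ⇒ cf)`. -/
inductive PF (L V P : Type) where
  | cf : CF L → PF L V P
  | imp : GF V P → CF L → PF L V P

/-- ELTL_FT formulas `ψ ::= pf | G ψ | F ψ | ψ ∧ ψ`. -/
inductive ELTL (L V P : Type) where
  | pf : PF L V P → ELTL L V P
  | globally : ELTL L V P → ELTL L V P
  | eventually : ELTL L V P → ELTL L V P
  | and : ELTL L V P → ELTL L V P → ELTL L V P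

def CF.sat {L V P : Type} : CF L → Config L V P → Prop
  | .emptyAll S, σ => ∀ ℓ ∈ S, σ.κ ℓ = 0
  | .notEmptyAll S, σ => ¬ ∀ ℓ ∈ S, σ.κ ℓ = 0
  | .and a b, σ => a.sat σ ∧ b.sat σ

def GF.sat {L V P : Type} [Fintype P] : GF V P → Config L V P → Prop
  | .guard φ, σ => φ.holds σ.g σ.p
  | .and a b, σ => a.sat σ ∧ b.sat σ
  | .or a b, σ => a.sat σ ∨ b.sat σ

def PF.sat {L V P : Type} [Fintype P] : PF L V P → Config L V P → Prop
  | .cf c, σ => c.sat σ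
  | .imp g c, σ => GF.sat g σ → c.sat σ

/-- Satisfaction of an ELTL_FT formula by an infinite path `π` of configurations, with
standard LTL semantics for `G` and `F`. -/
def ELTL.sat {L V P : Type} [Fintype P] : ELTL L V P → (ℕ → Config L V P) → Prop
  | .pf f, π => f.sat (π 0)
  | .globally ψ, π => ∀ n : ℕ, ψ.sat fun t => π (n + t)
  | .eventually ψ, π => ∃ n : ℕ, ψ.sat fun t => π (n + t)
  | .and a b, π => a.sat π ∧ b.sat π

/-! ### The sketch threshold automaton associated with a Σ₂ quantified Boolean formula
`∃x₁…x_m ∀y₁…y_k φ(x,y)` with `φ` in 3-DNF.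

The matrix `φ` is given by `d : Fin D → Fin 3 → (Fin m ⊕ Fin k) × Bool`, where
`d j t = (s, pol)` means that the `t`-th literal of the `j`-th disjunct is the variable `s`
(`Sum.inl i` for `x_i`, `Sum.inr j'` for `y_{j'}`) with polarity `pol`. -/

/-- A literal holds under assignments `a` (for the `x`s) and `b` (for the `y`s). -/
def qlitVal {m k : ℕ} (a : Fin m → Bool) (b : Fin k → Bool)
    (l : (Fin m ⊕ Fin k) × Bool) : Prop :=
  (match l.1 with | Sum.inl i => a i | Sum.inr j => b j) = l.2

/-- Truth of the quantified Boolean formula `∃x ∀y φ(x,y)`. -/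
def qbfTrue {m k D : ℕ} (d : Fin D → Fin 3 → (Fin m ⊕ Fin k) × Bool) : Prop :=
  ∃ a : Fin m → Bool, ∀ b : Fin k → Bool, ∃ j : Fin D, ∀ t : Fin 3, qlitVal a b (d j t)

/-- Locations: `ℓ_{x_0}, …, ℓ_{x_m}`, `ℓ_{y_0}, …, ℓ_{y_k}`, `ℓ_{z_j}`/`ℓ_{z̄_j}`, `ℓ_F`. -/
abbrev QLoc (m k : ℕ) := Fin (m + 1) ⊕ Fin (k + 1) ⊕ (Fin k × Bool) ⊕ Unit

def xLoc {m k : ℕ} (i : Fin (m + 1)) : QLoc m k := Sum.inl i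
def yLoc {m k : ℕ} (j : Fin (k + 1)) : QLoc m k := Sum.inr (Sum.inl j)
def zLoc {m k : ℕ} (j : Fin k) (b : Bool) : QLoc m k := Sum.inr (Sum.inr (Sum.inl (j, b)))
def qFLoc {m k : ℕ} : QLoc m k := Sum.inr (Sum.inr (Sum.inr ()))

/-- Shared variables: `a`, `b_i`/`b̄_i` and `c_j`/`c̄_j`. -/
abbrev QVar (m k : ℕ) := Unit ⊕ (Fin m × Bool) ⊕ (Fin k × Bool)

def varA {m k : ℕ} : QVar m k := Sum.inl ()
def varB {m k : ℕ} (i : Fin m) (b : Bool) : QVar m k := Sum.inr (Sum.inl (i, b))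
def varCq {m k : ℕ} (j : Fin k) (b : Bool) : QVar m k := Sum.inr (Sum.inr (j, b))

/-- The shared variable `var(p)` associated with a literal: `var(x_i) = b_i`,
`var(¬x_i) = b̄_i`, `var(y_j) = c_j`, `var(¬y_j) = c̄_j`. -/
def litVar {m k : ℕ} (l : (Fin m ⊕ Fin k) × Bool) : QVar m k :=
  match l.1 with
  | Sum.inl i => varB i l.2
  | Sum.inr j => varCq j l.2

/-- Rules of the automaton. -/
abbrev QRule (m k D : ℕ) :=
  (Fin m × Bool) ⊕ Unit ⊕ (Fin k × Bool) ⊕ (Fin k × Bool) ⊕ Fin D ⊕ Bool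

def constGuard {V P : Type} (isRise : Bool) (x : V) (a : ℚ) : TGuard V P :=
  ⟨x, isRise, a, fun _ => 0⟩

def unitUpd {V : Type} [DecidableEq V] (x : V) : V → ℕ := fun v => if v = x then 1 else 0

theorem unitUpd_le_one {V : Type} [DecidableEq V] (x v : V) : unitUpd x v ≤ 1 := by
  unfold unitUpd; split <;> omega

/-- The rules of `TA[μ]`, where `μ` is an assignment to the indeterminates `v₁, …, v_m`. -/
def qbfRule {m k D : ℕ} (d : Fin D → Fin 3 → (Fin m ⊕ Fin k) × Bool)
    (μ : Fin m → ℚ) : QRule m k D → TRule (QLoc m k) (QVar m k) Unit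
  | Sum.inl (i, true) =>
      -- `(ℓ_{x_{i-1}}, ℓ_{x_i}, a < v_i·n, b_i++)`
      ⟨xLoc i.castSucc, xLoc i.succ, [⟨varA, false, 0, fun _ => μ i⟩],
        unitUpd (varB i true), fun x => unitUpd_le_one _ x⟩
  | Sum.inl (i, false) =>
      -- `(ℓ_{x_{i-1}}, ℓ_{x_i}, a ≥ v_i·n, b̄_i++)`
      ⟨xLoc i.castSucc, xLoc i.succ, [⟨varA, true, 0, fun _ => μ i⟩],
        unitUpd (varB i false), fun x => unitUpd_le_one _ x⟩
  | Sum.inr (Sum.inl _) =>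
      -- `(ℓ_{x_m}, ℓ_{y_0}, true, no update)`
      ⟨xLoc (Fin.last m), yLoc 0, [], fun _ => 0, fun _ => Nat.zero_le 1⟩
  | Sum.inr (Sum.inr (Sum.inl (j, b))) =>
      -- `(ℓ_{y_{j-1}}, ℓ_{z_j} or ℓ_{z̄_j}, true, c_j++ or c̄_j++)`
      ⟨yLoc j.castSucc, zLoc j b, [], unitUpd (varCq j b), fun x => unitUpd_le_one _ x⟩
  | Sum.inr (Sum.inr (Sum.inr (Sum.inl (j, b)))) =>
      -- `(ℓ_{z_j}, ℓ_{y_j}, c_j ≥ n, no update)` and similarly for `z̄_j`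
      ⟨zLoc j b, yLoc j.succ, [⟨varCq j b, true, 0, fun _ => 1⟩],
        fun _ => 0, fun _ => Nat.zero_le 1⟩
  | Sum.inr (Sum.inr (Sum.inr (Sum.inr (Sum.inl jd)))) =>
      -- `(ℓ_{y_k}, ℓ_F, var(p) ≥ 1 ∧ var(q) ≥ 1 ∧ var(r) ≥ 1, no update)`
      ⟨yLoc (Fin.last k), qFLoc,
        [constGuard true (litVar (d jd 0)) 1, constGuard true (litVar (d jd 1)) 1,
          constGuard true (litVar (d jd 2)) 1],
        fun _ => 0, fun _ => Nat.zero_le 1⟩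
  | Sum.inr (Sum.inr (Sum.inr (Sum.inr (Sum.inr true)))) =>
      -- self-loop at `ℓ_{y_k}`
      ⟨yLoc (Fin.last k), yLoc (Fin.last k), [], fun _ => 0, fun _ => Nat.zero_le 1⟩
  | Sum.inr (Sum.inr (Sum.inr (Sum.inr (Sum.inr false)))) =>
      -- self-loop at `ℓ_F`
      ⟨qFLoc, qFLoc, [], fun _ => 0, fun _ => Nat.zero_le 1⟩

/-- The threshold automaton `TA[μ]`: one parameter `n`, resilience condition `n ≥ 1`,
`N(n) = n`, initial location `ℓ_{x_0}`. -/
def qbfTA {m k D : ℕ} (d : Fin D → Fin 3 → (Fin m ⊕ Fin k) × Bool)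
    (μ : Fin m → ℚ) : TA (QLoc m k) (QVar m k) Unit (QRule m k D) where
  initial := {xLoc 0}
  initial_nonempty := ⟨xLoc 0, rfl⟩
  rc := {p | 1 ≤ p ()}
  N := fun p => p ()
  rule := qbfRule d μ

/-- The guard formula of the `j`-th disjunct: `var(p) ≥ 1 ∧ var(q) ≥ 1 ∧ var(r) ≥ 1`. -/
def disjGF {m k D : ℕ} (d : Fin D → Fin 3 → (Fin m ⊕ Fin k) × Bool) (j : Fin D) :
    GF (QVar m k) Unit :=
  .and (.guard (constGuard true (litVar (d j 0)) 1))
    (.and (.guard (constGuard true (litVar (d j 1)) 1))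
      (.guard (constGuard true (litVar (d j 2)) 1)))

def bigOrGF {V P : Type} : GF V P → List (GF V P) → GF V P
  | g, [] => g
  | g, h :: t => .or g (bigOrGF h t)

/-- The formula `φ' = ⋁_{p∧q∧r ∈ φ} (var(p) ≥ 1 ∧ var(q) ≥ 1 ∧ var(r) ≥ 1)`. -/
def qbfPhi' {m k D : ℕ} (hD : 0 < D) (d : Fin D → Fin 3 → (Fin m ⊕ Fin k) × Bool) :
    GF (QVar m k) Unit :=
  bigOrGF (disjGF d ⟨0, hD⟩) (((List.finRange D).drop 1).map (disjGF d))

/-- The specification `ψ = F G (φ' ⇒ ({ℓ_{y_k}} = 0)) ∧ G ({ℓ_F} = 0)`. -/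
def qbfSpec {m k D : ℕ} (hD : 0 < D) (d : Fin D → Fin 3 → (Fin m ⊕ Fin k) × Bool) :
    ELTL (QLoc m k) (QVar m k) Unit :=
  .and
    (.eventually (.globally (.pf (.imp (qbfPhi' hD d)
      (.emptyAll {yLoc (Fin.last k)})))))
    (.globally (.pf (.cf (.emptyAll {qFLoc}))))

/-- Every infinite path of `TA[μ]` starting at an initial configuration satisfies `¬ψ`. -/
def qbfSpecRefuted {m k D : ℕ} (hD : 0 < D)
    (d : Fin D → Fin 3 → (Fin m ⊕ Fin k) × Bool) (μ : Fin m → ℚ) : Prop :=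
  ∀ σ₀ : Config (QLoc m k) (QVar m k) Unit, (qbfTA d μ).isInitial σ₀ →
    ∀ ρ : ℕ → QRule m k D, (qbfTA d μ).infApplicable σ₀ ρ →
      ¬ (qbfSpec hD d).sat ((qbfTA d μ).run σ₀ ρ)


/-!
If `∃x ∀y φ` holds, let `μ` be a witnessing assignment of the `x`s, as a 0/1 vector. The shared
variable `a` is never incremented and `n ≥ 1`, so the guard `a < v_i·n` holds iff `μ i = 1`, and
every process records the witness in the `b`-variables on its way through `x₁, …, x_m`. Every
rule other than the self-loops at `y_k` and `F` moves a process one step further along the chain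
of locations, so every run eventually idles, and since `F` has to stay empty it idles with a
process at `y_k`. That process has also set `c_j` or `c̄_j` for each `j`, which reads as an
assignment to the `y`s; some disjunct is true under both assignments, so `φ'` holds for ever
while `y_k` stays occupied, against `F G (φ' ⇒ {ℓ_{y_k}} = 0)`.

Conversely, given `μ` assign `x_i := (0 < μ i)`. For any assignment of the `y`s, a single process
can walk the chain choosing `b_i`/`b̄_i` and `c_j`/`c̄_j` accordingly, and then idle at `y_k`.
Along this run `F` stays empty and only variables of true literals are set; as the run violates
`ψ`, `φ'` holds at some point, and the disjunct witnessing it is true.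
-/

section General

variable {L V P R : Type} [DecidableEq L]

theorem TRule.fire_κ_add (r : TRule L V P) (σ : Config L V P) (h : 0 < σ.κ r.src) (ℓ : L) :
    (r.fire σ).κ ℓ + (if ℓ = r.src then 1 else 0) = σ.κ ℓ + (if ℓ = r.dst then 1 else 0) := by
  simp only [TRule.fire]
  split_ifs <;> subst_vars <;> omega

theorem TRule.sum_fire_κ_mul_add [Fintype L] (r : TRule L V P) (σ : Config L V P)
    (h : 0 < σ.κ r.src) (w : L → ℕ) :
    ∑ ℓ, (r.fire σ).κ ℓ * w ℓ + w r.src = ∑ ℓ, σ.κ ℓ * w ℓ + w r.dst := by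
  have := Finset.sum_congr rfl fun ℓ (_ : ℓ ∈ Finset.univ) =>
    congrArg (· * w ℓ) (r.fire_κ_add σ h ℓ)
  simpa [add_mul, Finset.sum_add_distrib, ite_mul] using this

theorem TRule.exists_pos_or_enters_of_fire (r : TRule L V P) (σ : Config L V P) (h : 0 < σ.κ r.src)
    (U : Set L) (hU : ∃ ℓ ∈ U, 0 < (r.fire σ).κ ℓ) :
    (∃ ℓ ∈ U, 0 < σ.κ ℓ) ∨ (r.src ∉ U ∧ r.dst ∈ U) := by
  by_cases hs : r.src ∈ U
  · exact Or.inl ⟨r.src, hs, h⟩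
  by_cases hd : r.dst ∈ U
  · exact Or.inr ⟨hs, hd⟩
  obtain ⟨ℓ, hℓ, hpos⟩ := hU
  have := r.fire_κ_add σ h ℓ
  rw [if_neg (ne_of_mem_of_not_mem hℓ hs), if_neg (ne_of_mem_of_not_mem hℓ hd)] at this
  exact Or.inl ⟨ℓ, hℓ, by omega⟩

theorem TRule.fire_eq_self (r : TRule L V P) (σ : Config L V P) (hloop : r.src = r.dst)
    (hupd : ∀ v, r.upd v = 0) : r.fire σ = σ := by
  simp only [TRule.fire, hloop, hupd, add_zero, Nat.add_sub_cancel]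

def Config.single (ℓ : L) (g : V → ℕ) (p : P → ℕ) : Config L V P :=
  ⟨Pi.single ℓ 1, g, p⟩

theorem TRule.fire_single (r : TRule L V P) (g : V → ℕ) (p : P → ℕ) :
    r.fire (Config.single r.src g p) = Config.single r.dst (fun v => g v + r.upd v) p := by
  simp only [TRule.fire, Config.single, Config.mk.injEq, and_true]
  funext ℓ
  simp only [Pi.single_apply]
  split_ifs <;> subst_vars <;> omega

namespace TA

variable (ta : TA L V P R) (σ : Config L V P) (ρ : ℕ → R)

theorem apply_append (τ₁ τ₂ : List R) :
    ta.apply σ (τ₁ ++ τ₂) = ta.apply (ta.apply σ τ₁) τ₂ := by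
  induction τ₁ generalizing σ with
  | nil => rfl
  | cons r τ ih => exact ih _

theorem run_succ (n : ℕ) : ta.run σ ρ (n + 1) = (ta.rule (ρ n)).fire (ta.run σ ρ n) := by
  simp only [run, List.range_succ, List.map_append, apply_append]
  rfl

theorem run_p (n : ℕ) : (ta.run σ ρ n).p = σ.p := by
  induction n with
  | zero => rfl
  | succ n ih => rw [run_succ]; exact ih

theorem run_g_succ (n : ℕ) (v : V) :
    (ta.run σ ρ (n + 1)).g v = (ta.run σ ρ n).g v + (ta.rule (ρ n)).upd v := by
  rw [run_succ]; rfl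

theorem run_g_eq_of_upd_eq_zero {v : V} (hv : ∀ r, (ta.rule r).upd v = 0) (n : ℕ) :
    (ta.run σ ρ n).g v = σ.g v := by
  induction n with
  | zero => rfl
  | succ n ih => rw [run_g_succ, ih, hv, add_zero]

theorem run_g_mono (v : V) : Monotone fun n => (ta.run σ ρ n).g v :=
  monotone_nat_of_le_succ fun n => by simp only [run_g_succ]; omega

theorem upd_le_run_g {t n : ℕ} (htn : t < n) (v : V) :
    (ta.rule (ρ t)).upd v ≤ (ta.run σ ρ n).g v := by
  have := ta.run_g_mono σ ρ v htn
  simp only [run_g_succ] at this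
  omega

theorem run_eq_of_forall_ge_fire_eq {N : ℕ}
    (h : ∀ n ≥ N, (ta.rule (ρ n)).fire (ta.run σ ρ n) = ta.run σ ρ n) :
    ∀ n ≥ N, ta.run σ ρ n = ta.run σ ρ N := by
  intro n hn
  induction n, hn using Nat.le_induction with
  | base => rfl
  | succ n hn ih => rw [run_succ, h n hn, ih]

variable {ta σ ρ} [Fintype P]

theorem exists_lt_enters_of_pos (hρ : ta.infApplicable σ ρ) {U : Set L}
    (h₀ : ∀ ℓ ∈ U, σ.κ ℓ = 0) {n : ℕ} (hn : ∃ ℓ ∈ U, 0 < (ta.run σ ρ n).κ ℓ) :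
    ∃ t < n, (ta.rule (ρ t)).src ∉ U ∧ (ta.rule (ρ t)).dst ∈ U := by
  induction n with
  | zero =>
    obtain ⟨ℓ, hℓ, hpos⟩ := hn
    exact absurd (h₀ ℓ hℓ) (Nat.pos_iff_ne_zero.mp hpos)
  | succ n ih =>
    rw [run_succ] at hn
    rcases (ta.rule (ρ n)).exists_pos_or_enters_of_fire _ (hρ n).1 U hn with hn | hcross
    · obtain ⟨t, ht, h⟩ := ih hn
      exact ⟨t, by omega, h⟩
    · exact ⟨n, n.lt_succ_self, hcross⟩

theorem sum_run_κ [Fintype L] (hρ : ta.infApplicable σ ρ) (n : ℕ) :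
    ∑ ℓ, (ta.run σ ρ n).κ ℓ = ∑ ℓ, σ.κ ℓ := by
  induction n with
  | zero => rfl
  | succ n ih =>
    have := (ta.rule (ρ n)).sum_fire_κ_mul_add _ (hρ n).1 fun _ => 1
    simp only [mul_one] at this
    rw [run_succ]
    omega

/-- If every rule is a self-loop or strictly increases `rank`, an infinite run eventually
fires only self-loops: the potential `∑ ℓ, κ ℓ * rank ℓ` never decreases, grows at every
other step, and is bounded because the number of processes is constant. -/
theorem exists_forall_ge_src_eq_dst [Fintype L] (hρ : ta.infApplicable σ ρ) (rank : L → ℕ)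
    (hrank : ∀ r, (ta.rule r).src = (ta.rule r).dst ∨
      rank (ta.rule r).src < rank (ta.rule r).dst) :
    ∃ N, ∀ n ≥ N, (ta.rule (ρ n)).src = (ta.rule (ρ n)).dst := by
  set Φ : ℕ → ℕ := fun n => ∑ ℓ, (ta.run σ ρ n).κ ℓ * rank ℓ
  have hstep n : Φ (n + 1) + rank (ta.rule (ρ n)).src = Φ n + rank (ta.rule (ρ n)).dst := by
    simp only [Φ, run_succ]
    exact (ta.rule (ρ n)).sum_fire_κ_mul_add _ (hρ n).1 rank
  have hmono : Monotone Φ := monotone_nat_of_le_succ fun n => by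
    rcases hrank (ρ n) with h | h
    · have := hstep n; rw [h] at this; omega
    · have := hstep n; omega
  have hbound n : Φ n ≤ (∑ ℓ, σ.κ ℓ) * Finset.univ.sup rank := by
    rw [← sum_run_κ hρ n, Finset.sum_mul]
    exact Finset.sum_le_sum fun ℓ _ =>
      Nat.mul_le_mul_left _ (Finset.le_sup (Finset.mem_univ ℓ))
  by_contra! hinf
  have hunb (c : ℕ) : ∃ n, c ≤ Φ n := by
    induction c with
    | zero => exact ⟨0, Nat.zero_le _⟩
    | succ c ih =>
      obtain ⟨n, hn⟩ := ih
      obtain ⟨t, hnt, hne⟩ := hinf n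
      have := hmono hnt
      have := hstep t
      have := (hrank (ρ t)).resolve_left hne
      exact ⟨t + 1, by omega⟩
  obtain ⟨n, hn⟩ := hunb ((∑ ℓ, σ.κ ℓ) * Finset.univ.sup rank + 1)
  have := hbound n
  omega

theorem exists_infApplicable_single (ta : TA L V P R) (I : L → (V → ℕ) → Prop)
    (p : P → ℕ) (hstep : ∀ ℓ g, I ℓ g → ∃ r, (ta.rule r).src = ℓ ∧
      (∀ φ ∈ (ta.rule r).guard, φ.holds g p) ∧
      I (ta.rule r).dst (fun v => g v + (ta.rule r).upd v))
    {ℓ₀ : L} {g₀ : V → ℕ} (h₀ : I ℓ₀ g₀) :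
    ∃ ρ, ta.infApplicable (Config.single ℓ₀ g₀ p) ρ ∧
      ∀ t, ∃ ℓ g, ta.run (Config.single ℓ₀ g₀ p) ρ t = Config.single ℓ g p ∧ I ℓ g := by
  choose next hsrc hguard hnext using hstep
  let step (s : {s : L × (V → ℕ) // I s.1 s.2}) : {s : L × (V → ℕ) // I s.1 s.2} :=
    ⟨((ta.rule (next _ _ s.2)).dst, fun v => s.1.2 v + (ta.rule (next _ _ s.2)).upd v),
      hnext _ _ s.2⟩
  let state (t : ℕ) := step^[t] ⟨(ℓ₀, g₀), h₀⟩
  let ρ t := next _ _ (state t).2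
  have hrun t : ta.run (Config.single ℓ₀ g₀ p) ρ t =
      Config.single (state t).1.1 (state t).1.2 p := by
    induction t with
    | zero => rfl
    | succ t ih =>
      rw [run_succ, ih, ← hsrc _ _ (state t).2, TRule.fire_single]
      simp only [state, Function.iterate_succ_apply']
      rfl
  refine ⟨ρ, fun t => ?_, fun t => ⟨_, _, hrun t, (state t).2⟩⟩
  rw [hrun t]
  refine ⟨?_, hguard _ _ (state t).2⟩
  simp [Config.single, ρ, hsrc]

end TA

end General

namespace QRule

variable {m k D : ℕ}

def x (i : Fin m) (c : Bool) : QRule m k D := Sum.inl (i, c)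
def toY : QRule m k D := Sum.inr (Sum.inl ())
def split (j : Fin k) (c : Bool) : QRule m k D := Sum.inr (Sum.inr (Sum.inl (j, c)))
def join (j : Fin k) (c : Bool) : QRule m k D := Sum.inr (Sum.inr (Sum.inr (Sum.inl (j, c))))
def loopY : QRule m k D := Sum.inr (Sum.inr (Sum.inr (Sum.inr (Sum.inr true))))
def loopF : QRule m k D := Sum.inr (Sum.inr (Sum.inr (Sum.inr (Sum.inr false))))

end QRule

section QBF

variable {m k D : ℕ}

/-- Position of a location along `x₀ → ⋯ → x_m → y₀ → z₁ → y₁ → ⋯ → z_k → y_k → F`, where `z_j`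
and `z̄_j` share a position. -/
def qrank : QLoc m k → ℕ
  | Sum.inl i => i
  | Sum.inr (Sum.inl j) => m + 1 + 2 * j
  | Sum.inr (Sum.inr (Sum.inl (j, _))) => m + 2 + 2 * j
  | Sum.inr (Sum.inr (Sum.inr _)) => m + 2 * k + 2

theorem litVar_injective : Function.Injective (litVar : (Fin m ⊕ Fin k) × Bool → QVar m k) := by
  rintro ⟨i | j, c⟩ ⟨i' | j', c'⟩ h <;> simp_all [litVar, varB, varCq]

variable (d : Fin D → Fin 3 → (Fin m ⊕ Fin k) × Bool) (μ : Fin m → ℚ)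

@[simp]
theorem qbfTA_rule : (qbfTA d μ).rule = qbfRule d μ := rfl

theorem qbfRule_src_eq_dst_or_qrank_dst (r : QRule m k D) :
    (qbfRule d μ r).src = (qbfRule d μ r).dst ∨
      qrank (qbfRule d μ r).dst = qrank (qbfRule d μ r).src + 1 := by
  rcases r with ⟨i, _ | _⟩ | _ | ⟨j, c⟩ | ⟨j, c⟩ | jd | _ | _ <;>
    simp [qbfRule, qrank, xLoc, yLoc, zLoc, qFLoc] <;> omega

theorem eq_loop_of_src_eq_dst {r : QRule m k D}
    (h : (qbfRule d μ r).src = (qbfRule d μ r).dst) : r = QRule.loopY ∨ r = QRule.loopF := by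
  rcases r with ⟨i, _ | _⟩ | _ | ⟨j, c⟩ | ⟨j, c⟩ | jd | _ | _ <;>
    simp_all [qbfRule, xLoc, yLoc, zLoc, qFLoc, QRule.loopY, QRule.loopF, Fin.ext_iff]

theorem eq_x_of_qrank_src {r : QRule m k D} {i : Fin m}
    (h : qrank (qbfRule d μ r).src = i) : ∃ c, r = QRule.x i c := by
  rcases r with ⟨i', _ | _⟩ | _ | ⟨j, c⟩ | ⟨j, c⟩ | jd | _ | _ <;>
    simp [qbfRule, qrank, xLoc, yLoc, zLoc, qFLoc, QRule.x, Fin.ext_iff] at h ⊢ <;> omega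

theorem eq_split_of_qrank_src {r : QRule m k D} {j : Fin k}
    (h : qrank (qbfRule d μ r).src = m + 1 + 2 * j) : ∃ c, r = QRule.split j c := by
  rcases r with ⟨i', _ | _⟩ | _ | ⟨j', c⟩ | ⟨j', c⟩ | jd | _ | _ <;>
    simp [qbfRule, qrank, xLoc, yLoc, zLoc, qFLoc, QRule.split, Fin.ext_iff] at h ⊢ <;> omega

theorem qbfRule_x_src (i : Fin m) (c : Bool) :
    (qbfRule d μ (QRule.x i c)).src = xLoc i.castSucc := by
  cases c <;> rfl

theorem qbfRule_x_dst (i : Fin m) (c : Bool) :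
    (qbfRule d μ (QRule.x i c)).dst = xLoc i.succ := by
  cases c <;> rfl

theorem qbfRule_x_upd (i : Fin m) (c : Bool) :
    (qbfRule d μ (QRule.x i c)).upd = unitUpd (varB i c) := by
  cases c <;> rfl

theorem qbfRule_upd_varA (r : QRule m k D) : (qbfRule d μ r).upd varA = 0 := by
  rcases r with ⟨i, _ | _⟩ | _ | ⟨j, c⟩ | ⟨j, c⟩ | jd | _ | _ <;>
    simp [qbfRule, unitUpd, varA, varB, varCq]

theorem qbfRule_x_guard_iff (i : Fin m) (c : Bool) (g : QVar m k → ℕ) (p : Unit → ℕ) :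
    (∀ φ ∈ (qbfRule d μ (QRule.x i c)).guard, φ.holds g p) ↔
      (c = true ↔ (g varA : ℚ) < μ i * p ()) := by
  cases c <;> simp [qbfRule, QRule.x, TGuard.holds]

theorem qbfRule_join_guard_iff (j : Fin k) (c : Bool) (g : QVar m k → ℕ) (p : Unit → ℕ) :
    (∀ φ ∈ (qbfRule d μ (QRule.join j c)).guard, φ.holds g p) ↔ p () ≤ g (varCq j c) := by
  simp [qbfRule, QRule.join, TGuard.holds]

end QBF

section Spec

theorem GF.sat_bigOrGF {L V P : Type} [Fintype P] (g : GF V P) (l : List (GF V P))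
    (σ : Config L V P) : (bigOrGF g l).sat σ ↔ ∃ h ∈ g :: l, h.sat σ := by
  induction l generalizing g with
  | nil => simp [bigOrGF]
  | cons h t ih => simp [bigOrGF, GF.sat, ih]

variable {m k D : ℕ} (hD : 0 < D) (d : Fin D → Fin 3 → (Fin m ⊕ Fin k) × Bool)

theorem disjGF_sat_iff (jd : Fin D) (σ : Config (QLoc m k) (QVar m k) Unit) :
    (disjGF d jd).sat σ ↔ ∀ t, 1 ≤ σ.g (litVar (d jd t)) := by
  simp [disjGF, GF.sat, constGuard, TGuard.holds, Fin.forall_fin_succ]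

theorem qbfPhi'_sat_iff (σ : Config (QLoc m k) (QVar m k) Unit) :
    (qbfPhi' hD d).sat σ ↔ ∃ jd, ∀ t, 1 ≤ σ.g (litVar (d jd t)) := by
  obtain ⟨D, rfl⟩ := Nat.exists_eq_add_of_lt hD
  simp [qbfPhi', GF.sat_bigOrGF, List.finRange_succ, ← disjGF_sat_iff, Fin.exists_fin_succ]

theorem qbfSpec_sat_iff (π : ℕ → Config (QLoc m k) (QVar m k) Unit) :
    (qbfSpec hD d).sat π ↔
      (∃ n, ∀ t, (qbfPhi' hD d).sat (π (n + t)) → (π (n + t)).κ (yLoc (Fin.last k)) = 0) ∧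
        ∀ n, (π n).κ qFLoc = 0 := by
  simp [qbfSpec, ELTL.sat, PF.sat, CF.sat]

end Spec

def qbfWitness {m k D : ℕ} (d : Fin D → Fin 3 → (Fin m ⊕ Fin k) × Bool) (a : Fin m → Bool) :
    Prop :=
  ∀ b : Fin k → Bool, ∃ jd, ∀ t, qlitVal a b (d jd t)

section Forward

variable {m k D : ℕ} (d : Fin D → Fin 3 → (Fin m ⊕ Fin k) × Bool)

theorem one_le_litVar_of_qlitVal {a : Fin m → Bool} {b : Fin k → Bool} {g : QVar m k → ℕ}
    (ha : ∀ i, 1 ≤ g (varB i (a i))) (hb : ∀ j, 1 ≤ g (varCq j (b j)))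
    {l : (Fin m ⊕ Fin k) × Bool} (hl : qlitVal a b l) : 1 ≤ g (litVar l) := by
  obtain ⟨i | j, c⟩ := l <;> simp only [qlitVal] at hl <;> subst hl
  exacts [ha i, hb j]

variable {μ : Fin m → ℚ} {σ₀ : Config (QLoc m k) (QVar m k) Unit} {ρ : ℕ → QRule m k D}

theorem exists_lt_qrank_src_eq (hσ₀ : (qbfTA d μ).isInitial σ₀)
    (hρ : (qbfTA d μ).infApplicable σ₀ ρ) {c n : ℕ} {ℓ : QLoc m k} (hcℓ : c < qrank ℓ)
    (hℓ : 0 < ((qbfTA d μ).run σ₀ ρ n).κ ℓ) :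
    ∃ t < n, qrank (qbfRule d μ (ρ t)).src = c := by
  have h₀ : ∀ ℓ ∈ {ℓ : QLoc m k | c < qrank ℓ}, σ₀.κ ℓ = 0 := by
    refine fun ℓ hℓ => hσ₀.2.1 ℓ ?_
    rintro rfl
    simp [qrank, xLoc] at hℓ
  obtain ⟨t, htn, hsrc, hdst⟩ := TA.exists_lt_enters_of_pos hρ h₀ ⟨ℓ, hcℓ, hℓ⟩
  refine ⟨t, htn, ?_⟩
  rw [qbfTA_rule] at hsrc hdst
  rcases qbfRule_src_eq_dst_or_qrank_dst d μ (ρ t) with h | h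
  · exact absurd (h ▸ hdst) hsrc
  · change ¬c < _ at hsrc
    change c < _ at hdst
    omega

/-- Since `a` stays zero and `n ≥ 1`, the guard `a < v_i·n` reads `0 < μ i`: a process leaves
`x_{i-1}` through the rule incrementing `b_i` if `0 < μ i`, and `b̄_i` otherwise. -/
theorem one_le_g_varB (hσ₀ : (qbfTA d μ).isInitial σ₀) (hρ : (qbfTA d μ).infApplicable σ₀ ρ)
    {n : ℕ} (hn : 0 < ((qbfTA d μ).run σ₀ ρ n).κ (yLoc (Fin.last k))) (i : Fin m) :
    1 ≤ ((qbfTA d μ).run σ₀ ρ n).g (varB i (decide (0 < μ i))) := by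
  obtain ⟨t, htn, hsrc⟩ := exists_lt_qrank_src_eq d hσ₀ hρ
    (by simp only [qrank, yLoc, Fin.val_last]; omega : (i : ℕ) < qrank (yLoc (Fin.last k))) hn
  obtain ⟨c, hc⟩ := eq_x_of_qrank_src d μ hsrc
  have hen := hρ t
  rw [qbfTA_rule, hc] at hen
  have hguard := (qbfRule_x_guard_iff d μ i c _ _).1 hen.2
  rw [(qbfTA d μ).run_g_eq_of_upd_eq_zero σ₀ ρ (qbfRule_upd_varA d μ) t, hσ₀.2.2,
    (qbfTA d μ).run_p σ₀ ρ t] at hguard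
  have hn1 : (0 : ℚ) < σ₀.p () := by exact_mod_cast hσ₀.1.1
  have hc' : c = decide (0 < μ i) := by
    cases c <;> simpa [mul_pos_iff_of_pos_right hn1] using hguard
  have := (qbfTA d μ).upd_le_run_g σ₀ ρ htn (varB i (decide (0 < μ i)))
  rwa [qbfTA_rule, hc, qbfRule_x_upd, hc', unitUpd, if_pos rfl] at this

theorem exists_one_le_g_varCq (hσ₀ : (qbfTA d μ).isInitial σ₀)
    (hρ : (qbfTA d μ).infApplicable σ₀ ρ) {n : ℕ}
    (hn : 0 < ((qbfTA d μ).run σ₀ ρ n).κ (yLoc (Fin.last k))) (j : Fin k) :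
    ∃ c, 1 ≤ ((qbfTA d μ).run σ₀ ρ n).g (varCq j c) := by
  obtain ⟨t, htn, hsrc⟩ := exists_lt_qrank_src_eq d hσ₀ hρ (by
    simp only [qrank, yLoc, Fin.val_last]; omega : m + 1 + 2 * (j : ℕ) < qrank (yLoc (Fin.last k)))
    hn
  obtain ⟨c, hc⟩ := eq_split_of_qrank_src d μ hsrc
  refine ⟨c, ?_⟩
  have := (qbfTA d μ).upd_le_run_g σ₀ ρ htn (varCq j c)
  rwa [qbfTA_rule, hc, show (qbfRule d μ (QRule.split j c)).upd = unitUpd (varCq j c) from rfl,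
    unitUpd, if_pos rfl] at this

theorem qbfSpecRefuted_of_qbfWitness (hD : 0 < D)
    (h : qbfWitness d fun i => decide (0 < μ i)) : qbfSpecRefuted hD d μ := by
  intro σ₀ hσ₀ ρ hρ hψ
  obtain ⟨⟨n₀, hn₀⟩, hF⟩ := (qbfSpec_sat_iff hD d _).1 hψ
  obtain ⟨N, hN⟩ := TA.exists_forall_ge_src_eq_dst hρ qrank fun r =>
    (qbfRule_src_eq_dst_or_qrank_dst d μ r).imp_right fun h => by rw [qbfTA_rule, h]; omega
  have hloop n (hn : n ≥ N) : ρ n = QRule.loopY ∨ ρ n = QRule.loopF :=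
    eq_loop_of_src_eq_dst d μ (hN n hn)
  have hconst := (qbfTA d μ).run_eq_of_forall_ge_fire_eq σ₀ ρ fun n hn =>
    TRule.fire_eq_self _ _ (hN n hn) (by
      rcases hloop n hn with h | h <;> simp [h, qbfRule, QRule.loopY, QRule.loopF])
  have hY : 0 < ((qbfTA d μ).run σ₀ ρ N).κ (yLoc (Fin.last k)) := by
    have hsrc := (hρ N).1
    rcases hloop N le_rfl with h | h <;> rw [h] at hsrc
    · exact hsrc
    · exact absurd (hF N) hsrc.ne'
  choose b hb using exists_one_le_g_varCq d hσ₀ hρ hY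
  obtain ⟨jd, hjd⟩ := h b
  have hφ : (qbfPhi' hD d).sat ((qbfTA d μ).run σ₀ ρ N) :=
    (qbfPhi'_sat_iff hD d _).2 ⟨jd, fun t =>
      one_le_litVar_of_qlitVal (one_le_g_varB d hσ₀ hρ hY) hb (hjd t)⟩
  have := hn₀ N
  rw [hconst (n₀ + N) (by omega)] at this
  exact hY.ne' (this hφ)

end Forward

section Backward

variable {m k D : ℕ} (d : Fin D → Fin 3 → (Fin m ⊕ Fin k) × Bool) (μ : Fin m → ℚ)

theorem unitUpd_litVar_eq_zero {a : Fin m → Bool} {b : Fin k → Bool}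
    {l l' : (Fin m ⊕ Fin k) × Bool} (hl' : qlitVal a b l') (hl : ¬qlitVal a b l) :
    unitUpd (litVar l') (litVar l) = 0 :=
  if_neg fun h => hl (by rwa [litVar_injective h])

/-- Invariant of the single process that walks `x₀ → ⋯ → y_k` choosing `b_i` or `b̄_i` as `a`
does and `c_j` or `c̄_j` as `b` does. -/
def canonInv (a : Fin m → Bool) (b : Fin k → Bool) (ℓ : QLoc m k) (g : QVar m k → ℕ) : Prop :=
  ℓ ≠ qFLoc ∧ g varA = 0 ∧ (∀ l, ¬qlitVal a b l → g (litVar l) = 0) ∧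
    ∀ j c, ℓ = zLoc j c → 1 ≤ g (varCq j c)

theorem canonInv_yLoc {a : Fin m → Bool} {b : Fin k → Bool} {ℓ : QLoc m k} {g : QVar m k → ℕ}
    (h : canonInv a b ℓ g) (j : Fin (k + 1)) : canonInv a b (yLoc j) g :=
  ⟨by simp [yLoc, qFLoc], h.2.1, h.2.2.1, by simp [yLoc, zLoc]⟩

theorem canonInv_step (b : Fin k → Bool) {ℓ : QLoc m k} {g : QVar m k → ℕ}
    (h : canonInv (fun i => decide (0 < μ i)) b ℓ g) :
    ∃ r, (qbfRule d μ r).src = ℓ ∧ (∀ φ ∈ (qbfRule d μ r).guard, φ.holds g fun _ => 1) ∧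
      canonInv (fun i => decide (0 < μ i)) b (qbfRule d μ r).dst
        (fun v => g v + (qbfRule d μ r).upd v) := by
  obtain ⟨hF, hA, hlit, hz⟩ := h
  rcases ℓ with i | j | ⟨j, c⟩ | ⟨⟩
  · by_cases hi : (i : ℕ) < m
    · refine ⟨QRule.x ⟨i, hi⟩ (decide (0 < μ ⟨i, hi⟩)), by simp [qbfRule_x_src, xLoc],
        by simp [qbfRule_x_guard_iff, hA], by simp [qbfRule_x_dst, xLoc, qFLoc], ?_,
        fun l hl => ?_, by simp [qbfRule_x_dst, xLoc, zLoc]⟩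
      · simp only [qbfRule_x_upd, hA, zero_add]
        simp [unitUpd, varA, varB]
      · simp only [qbfRule_x_upd, hlit l hl, zero_add]
        exact unitUpd_litVar_eq_zero (a := fun i => decide (0 < μ i)) (b := b)
          (l' := (Sum.inl ⟨i, hi⟩, _)) rfl hl
    · obtain rfl : i = Fin.last m := Fin.ext (by have := i.isLt; simp only [Fin.val_last]; omega)
      exact ⟨QRule.toY, rfl, by simp [qbfRule, QRule.toY], by
        simpa [qbfRule, QRule.toY] using canonInv_yLoc ⟨hF, hA, hlit, hz⟩ 0⟩
  · by_cases hj : (j : ℕ) < k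
    · refine ⟨QRule.split ⟨j, hj⟩ (b ⟨j, hj⟩), by simp [qbfRule, QRule.split, yLoc],
        by simp [qbfRule, QRule.split], by simp [qbfRule, QRule.split, zLoc, qFLoc], ?_,
        fun l hl => ?_, by simp [qbfRule, QRule.split, zLoc, unitUpd]⟩
      · simp only [qbfRule, QRule.split, hA, zero_add]
        simp [unitUpd, varA, varCq]
      · simp only [qbfRule, QRule.split, hlit l hl, zero_add]
        exact unitUpd_litVar_eq_zero (a := fun i => decide (0 < μ i)) (b := b)
          (l' := (Sum.inr ⟨j, hj⟩, _)) rfl hl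
    · obtain rfl : j = Fin.last k := Fin.ext (by have := j.isLt; simp only [Fin.val_last]; omega)
      exact ⟨QRule.loopY, rfl, by simp [qbfRule, QRule.loopY], by
        simpa [qbfRule, QRule.loopY] using canonInv_yLoc ⟨hF, hA, hlit, hz⟩ _⟩
  · refine ⟨QRule.join j c, rfl, (qbfRule_join_guard_iff d μ j c g _).2 (hz j c rfl), ?_⟩
    simpa [qbfRule, QRule.join] using canonInv_yLoc ⟨hF, hA, hlit, hz⟩ j.succ
  · exact absurd rfl hF

theorem isInitial_single_xLoc_zero :
    (qbfTA d μ).isInitial (Config.single (xLoc 0) 0 fun _ => 1) := by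
  refine ⟨⟨le_refl 1, ?_⟩, fun ℓ hℓ => ?_, fun _ => rfl⟩
  · simp [Config.single, qbfTA]
  · simpa [Config.single, qbfTA, Pi.single_apply] using hℓ

theorem qbfWitness_of_qbfSpecRefuted (hD : 0 < D) (h : qbfSpecRefuted hD d μ) :
    qbfWitness d fun i => decide (0 < μ i) := by
  intro b
  by_contra! hno
  obtain ⟨ρ, hρ, hinv⟩ := (qbfTA d μ).exists_infApplicable_single
    (canonInv (fun i => decide (0 < μ i)) b) (fun _ => 1) (fun _ _ => canonInv_step d μ b)
    (ℓ₀ := xLoc 0) (g₀ := 0) ⟨by simp [xLoc, qFLoc], rfl, fun _ _ => rfl, by simp [xLoc, zLoc]⟩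
  -- along this run `F` stays empty and `φ'` never holds, so it satisfies `ψ`
  refine h _ (isInitial_single_xLoc_zero d μ) ρ hρ ((qbfSpec_sat_iff hD d _).2
    ⟨⟨0, fun t hφ => ?_⟩, fun n => ?_⟩)
  · obtain ⟨ℓ, g, hrun, -, -, hlit, -⟩ := hinv (0 + t)
    rw [hrun, qbfPhi'_sat_iff] at hφ
    obtain ⟨jd, hjd⟩ := hφ
    obtain ⟨s, hs⟩ := hno jd
    exact absurd (hlit _ hs) (Nat.one_le_iff_ne_zero.1 (hjd s))
  · obtain ⟨ℓ, g, hrun, hF, -⟩ := hinv n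
    rw [hrun]
    exact Pi.single_eq_of_ne hF.symm 1

end Backward

theorem qbfSpecRefuted_iff {m k D : ℕ} (hD : 0 < D)
    (d : Fin D → Fin 3 → (Fin m ⊕ Fin k) × Bool) (μ : Fin m → ℚ) :
    qbfSpecRefuted hD d μ ↔ qbfWitness d fun i => decide (0 < μ i) :=
  ⟨qbfWitness_of_qbfSpecRefuted d μ hD, qbfSpecRefuted_of_qbfWitness d hD⟩

/-- `∃x ∀y φ(x,y)` is true iff there is an assignment `μ` to the indeterminates such that
every infinite path of `TA[μ]` from an initial configuration satisfies `¬ψ`; moreover, in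
that case `μ` can be taken with values in `{0, 1}`. -/
theorem qbf_iff_synthesis {m k D : ℕ} (hD : 0 < D)
    (d : Fin D → Fin 3 → (Fin m ⊕ Fin k) × Bool) :
    (qbfTrue d ↔ ∃ μ : Fin m → ℚ, qbfSpecRefuted hD d μ) ∧
    (qbfTrue d → ∃ μ : Fin m → ℚ, (∀ i, μ i = 0 ∨ μ i = 1) ∧ qbfSpecRefuted hD d μ) := by
  have synthesis : qbfTrue d →
      ∃ μ : Fin m → ℚ, (∀ i, μ i = 0 ∨ μ i = 1) ∧ qbfSpecRefuted hD d μ := by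
    rintro ⟨a, ha⟩
    refine ⟨fun i => if a i then 1 else 0, fun i => by cases a i <;> simp, ?_⟩
    have hsign : (fun i => decide (0 < (if a i then 1 else 0 : ℚ))) = a :=
      funext fun i => by cases a i <;> simp
    rwa [qbfSpecRefuted_iff, hsign]
  refine ⟨⟨fun h => (synthesis h).imp fun _ => And.right, fun ⟨μ, hμ⟩ => ?_⟩, synthesis⟩
  exact ⟨_, (qbfSpecRefuted_iff hD d μ).1 hμ⟩
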